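/- The kernel of ρ₁ : Aut(ℋ_{f0}) → GL(2,ℤ) is an abelian group isomorphic to ℚ²; explicitly, the automorphisms inducing the identity on ℤ² are those of the form h(0,1,0) = (u₁,1,0), h(0,0,1) = (u₂,0,1) with (u₁,u₂) ∈ ℚ², and composition corresponds to addition in ℚ². -/

import Mathlib

/-- The fibrewise rationalization of the discrete Heisenberg group: ℚ × ℤ × ℤ. -/
def Hf : Type := ℚ × ℤ × ℤ

namespace Hf

def mk (a : ℚ) (b c : ℤ) : Hf := (a, b, c)

@[simp] lemma fst_mk (a : ℚ) (b c : ℤ) : (mk a b c).1 = a := rfl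
@[simp] lemma snd_fst_mk (a : ℚ) (b c : ℤ) : (mk a b c).2.1 = b := rfl
@[simp] lemma snd_snd_mk (a : ℚ) (b c : ℤ) : (mk a b c).2.2 = c := rfl

lemma mk_inj {a x : ℚ} {b c y z : ℤ} : mk a b c = mk x y z ↔ a = x ∧ b = y ∧ c = z :=
  ⟨fun h => ⟨congrArg (fun p : Hf => p.1) h, congrArg (fun p : Hf => p.2.1) h,
      congrArg (fun p : Hf => p.2.2) h⟩,
   fun h => by rw [h.1, h.2.1, h.2.2]⟩

lemma eta (p : Hf) : p = mk p.1 p.2.1 p.2.2 := rfl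

instance : One Hf := ⟨mk 0 0 0⟩
instance : Mul Hf :=
  ⟨fun p q => mk (p.1 + q.1 + (p.2.1 : ℚ) * (q.2.2 : ℚ)) (p.2.1 + q.2.1) (p.2.2 + q.2.2)⟩
instance : Inv Hf :=
  ⟨fun p => mk (-p.1 + (p.2.1 : ℚ) * (p.2.2 : ℚ)) (-p.2.1) (-p.2.2)⟩

lemma mul_def (p q : Hf) :
    p * q = mk (p.1 + q.1 + (p.2.1 : ℚ) * (q.2.2 : ℚ)) (p.2.1 + q.2.1) (p.2.2 + q.2.2) := rfl
lemma one_def : (1 : Hf) = mk 0 0 0 := rfl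
lemma inv_def (p : Hf) :
    p⁻¹ = mk (-p.1 + (p.2.1 : ℚ) * (p.2.2 : ℚ)) (-p.2.1) (-p.2.2) := rfl

instance instGroup : Group Hf := Group.ofLeftAxioms
  (by intro p q r
      simp only [mul_def, fst_mk, snd_fst_mk, snd_snd_mk, mk_inj]
      refine ⟨by push_cast; ring, by ring, by ring⟩)
  (by intro p
      rw [eta p]
      simp only [mul_def, one_def, fst_mk, snd_fst_mk, snd_snd_mk, mk_inj]
      refine ⟨by push_cast; ring, by ring, by ring⟩)
  (by intro p
      simp only [mul_def, one_def, inv_def, fst_mk, snd_fst_mk, snd_snd_mk, mk_inj]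
      refine ⟨by push_cast; ring, by ring, by ring⟩)

lemma mk_mul (a x : ℚ) (b c y z : ℤ) :
    mk a b c * mk x y z = mk (a + x + (b : ℚ) * (z : ℚ)) (b + y) (c + z) := by
  simp [mul_def]

end Hf

/-- The projection of ℋ_{f0} onto ℋ_{f0}/Z(ℋ_{f0}) = ℤ². -/
def hfPr (g : Hf) : ℤ × ℤ := (g.2.1, g.2.2)


namespace Hf

lemma inv_mk (a : ℚ) (b c : ℤ) :
    (mk a b c)⁻¹ = mk (-a + (b : ℚ) * (c : ℚ)) (-b) (-c) := rfl

lemma zpow_g1 (u : ℚ) (n : ℤ) : (mk u 1 0) ^ n = mk ((n : ℚ) * u) n 0 := by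
  induction n using Int.induction_on with
  | zero => simp [one_def]
  | succ k ih =>
      rw [zpow_add_one, ih, mk_mul]
      simp only [mk_inj]
      refine ⟨by push_cast; ring, by push_cast, by ring⟩
  | pred k ih =>
      rw [zpow_sub_one, ih, inv_mk, mk_mul]
      simp only [mk_inj]
      refine ⟨by push_cast; ring, by ring, by ring⟩

lemma zpow_g2 (u : ℚ) (n : ℤ) : (mk u 0 1) ^ n = mk ((n : ℚ) * u) 0 n := by
  induction n using Int.induction_on with
  | zero => simp [one_def]
  | succ k ih =>
      rw [zpow_add_one, ih, mk_mul]
      simp only [mk_inj]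
      refine ⟨by push_cast; ring, by ring, by push_cast⟩
  | pred k ih =>
      rw [zpow_sub_one, ih, inv_mk, mk_mul]
      simp only [mk_inj]
      refine ⟨by push_cast; ring, by ring, by ring⟩

lemma decomp (a : ℚ) (b c : ℤ) :
    mk a b c = mk (a - (b : ℚ) * (c : ℚ)) 0 0 * (mk 0 1 0) ^ b * (mk 0 0 1) ^ c := by
  rw [zpow_g1, zpow_g2, mk_mul, mk_mul]
  simp only [mk_inj]
  refine ⟨by push_cast; ring, by ring, by ring⟩

/-- If an automorphism sends the two standard generators to elements with the same
projection, then images of central elements are central. -/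
lemma central_snd (k : Hf ≃* Hf) (v₁ v₂ : ℚ)
    (h1 : k (mk 0 1 0) = mk v₁ 1 0) (h2 : k (mk 0 0 1) = mk v₂ 0 1) (a : ℚ) :
    (k (mk a 0 0)).2.1 = 0 ∧ (k (mk a 0 0)).2.2 = 0 := by
  have c1 : mk a 0 0 * mk 0 1 0 = mk 0 1 0 * mk a 0 0 := by
    rw [mk_mul, mk_mul]; simp only [mk_inj]; norm_num
  have c2 : mk a 0 0 * mk 0 0 1 = mk 0 0 1 * mk a 0 0 := by
    rw [mk_mul, mk_mul]; simp only [mk_inj]; norm_num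
  have e1 : k (mk a 0 0) * mk v₁ 1 0 = mk v₁ 1 0 * k (mk a 0 0) := by
    rw [← h1, ← map_mul, ← map_mul, c1]
  have e2 : k (mk a 0 0) * mk v₂ 0 1 = mk v₂ 0 1 * k (mk a 0 0) := by
    rw [← h2, ← map_mul, ← map_mul, c2]
  set p := k (mk a 0 0) with hp
  rw [eta p, mk_mul, mk_mul] at e1 e2
  rw [mk_inj] at e1 e2
  constructor
  · have := e2.1
    have hy : (p.2.1 : ℚ) = 0 := by push_cast at this; linarith
    exact_mod_cast hy
  · have := e1.1
    have hz : (p.2.2 : ℚ) = 0 := by push_cast at this; linarith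
    exact_mod_cast hz

/-- Such an automorphism fixes the center pointwise. -/
lemma central_fix (k : Hf ≃* Hf) (v₁ v₂ : ℚ)
    (h1 : k (mk 0 1 0) = mk v₁ 1 0) (h2 : k (mk 0 0 1) = mk v₂ 0 1) (a : ℚ) :
    k (mk a 0 0) = mk a 0 0 := by
  -- the commutator [g₁, g₂] is (1,0,0), and it is preserved
  have comm : ∀ w₁ w₂ : ℚ, mk w₁ 1 0 * mk w₂ 0 1 * (mk w₁ 1 0)⁻¹ * (mk w₂ 0 1)⁻¹
      = mk 1 0 0 := by
    intro w₁ w₂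
    rw [inv_mk, inv_mk, mk_mul, mk_mul, mk_mul]
    simp only [mk_inj]
    refine ⟨by push_cast; ring, by ring, by ring⟩
  have hone : k (mk 1 0 0) = mk 1 0 0 := by
    have : k (mk 0 1 0 * mk 0 0 1 * (mk 0 1 0)⁻¹ * (mk 0 0 1)⁻¹)
        = mk v₁ 1 0 * mk v₂ 0 1 * (mk v₁ 1 0)⁻¹ * (mk v₂ 0 1)⁻¹ := by
      simp only [map_mul, map_inv, h1, h2]
    rw [comm, comm] at this
    exact this
  -- build the additive endomorphism of ℚ given by the first coordinate
  have hsnd := central_snd k v₁ v₂ h1 h2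
  have keq : ∀ a : ℚ, k (mk a 0 0) = mk ((k (mk a 0 0)).1) 0 0 := by
    intro a
    have h := eta (k (mk a 0 0))
    rw [(hsnd a).1, (hsnd a).2] at h
    exact h
  set f : ℚ → ℚ := fun a => (k (mk a 0 0)).1 with hf
  have hadd : ∀ a b : ℚ, f (a + b) = f a + f b := by
    intro a b
    have : k (mk (a + b) 0 0) = k (mk a 0 0) * k (mk b 0 0) := by
      rw [← map_mul]
      congr 1
      rw [mk_mul]; simp only [mk_inj]; norm_num
    rw [keq (a+b), keq a, keq b, mk_mul] at this
    have := (mk_inj.mp this).1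
    simpa using this
  let F : ℚ →+ ℚ := AddMonoidHom.mk' f hadd
  have hF : ∀ a, F a = f a := fun _ => rfl
  have hf1 : F 1 = 1 := by
    rw [hF]
    show (k (mk 1 0 0)).1 = 1
    rw [hone, fst_mk]
  have key : ∀ a : ℚ, f a = a := by
    intro a
    have h1' : (a.den : ℤ) • F a = (a.num : ℤ) • F 1 := by
      rw [← map_zsmul, ← map_zsmul]
      congr 1
      rw [zsmul_eq_mul, zsmul_eq_mul, mul_one]
      push_cast
      rw [mul_comm]
      exact_mod_cast Rat.mul_den_eq_num a
    rw [hf1, zsmul_eq_mul, zsmul_eq_mul, mul_one] at h1'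
    have hden : ((a.den : ℤ) : ℚ) ≠ 0 := by
      exact_mod_cast a.den_nz
    have : F a = (a.num : ℚ) / (a.den : ℚ) := by
      field_simp at h1' ⊢
      rw [mul_comm]; exact_mod_cast h1'
    rw [hF] at this
    rw [this]
    exact_mod_cast Rat.num_div_den a
  rw [keq a]
  rw [show (k (mk a 0 0)).1 = f a from rfl, key a]

end Hf

/-- The kernel of ρ₁ : Aut(ℋ_{f0}) → GL(2,ℤ) is abelian, isomorphic to ℚ²: an
automorphism induces the identity on ℤ² iff it has the form h(0,1,0) = (u₁,1,0),
h(0,0,1) = (u₂,0,1) for a unique (u₁,u₂) ∈ ℚ², and composition corresponds to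
addition in ℚ². -/
theorem hf_ker_rho1 :
    (∀ h : Hf ≃* Hf,
      (∀ g : Hf, hfPr (h g) = hfPr g) ↔
      ∃ u₁ u₂ : ℚ, h (Hf.mk 0 1 0) = Hf.mk u₁ 1 0 ∧ h (Hf.mk 0 0 1) = Hf.mk u₂ 0 1) ∧
    (∀ (h k : Hf ≃* Hf) (u₁ u₂ v₁ v₂ : ℚ),
      h (Hf.mk 0 1 0) = Hf.mk u₁ 1 0 → h (Hf.mk 0 0 1) = Hf.mk u₂ 0 1 →
      k (Hf.mk 0 1 0) = Hf.mk v₁ 1 0 → k (Hf.mk 0 0 1) = Hf.mk v₂ 0 1 →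
      (h.trans k) (Hf.mk 0 1 0) = Hf.mk (u₁ + v₁) 1 0 ∧
      (h.trans k) (Hf.mk 0 0 1) = Hf.mk (u₂ + v₂) 0 1) := by
  constructor
  · intro h
    constructor
    · intro hpr
      refine ⟨(h (Hf.mk 0 1 0)).1, (h (Hf.mk 0 0 1)).1, ?_, ?_⟩
      · have := hpr (Hf.mk 0 1 0)
        rw [Hf.eta (h (Hf.mk 0 1 0))]
        simp only [hfPr, Prod.mk.injEq] at this
        rw [this.1, this.2]; rfl
      · have := hpr (Hf.mk 0 0 1)
        rw [Hf.eta (h (Hf.mk 0 0 1))]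
        simp only [hfPr, Prod.mk.injEq] at this
        rw [this.1, this.2]; rfl
    · rintro ⟨u₁, u₂, h1, h2⟩ g
      conv_lhs => rw [Hf.eta g, Hf.decomp g.1 g.2.1 g.2.2]
      rw [map_mul, map_mul, map_zpow, map_zpow,
        h1, h2, Hf.central_fix h u₁ u₂ h1 h2, Hf.zpow_g1, Hf.zpow_g2,
        Hf.mk_mul, Hf.mk_mul]
      simp [hfPr]
  · intro h k u₁ u₂ v₁ v₂ h1 h2 k1 k2
    have d1 : Hf.mk u₁ 1 0 = Hf.mk u₁ 0 0 * Hf.mk 0 1 0 := by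
      rw [Hf.mk_mul]; simp only [Hf.mk_inj]; norm_num
    have d2 : Hf.mk u₂ 0 1 = Hf.mk u₂ 0 0 * Hf.mk 0 0 1 := by
      rw [Hf.mk_mul]; simp only [Hf.mk_inj]; norm_num
    constructor
    · show k (h (Hf.mk 0 1 0)) = _
      rw [h1, d1, map_mul, Hf.central_fix k v₁ v₂ k1 k2, k1, Hf.mk_mul]
      simp only [Hf.mk_inj]; norm_num
    · show k (h (Hf.mk 0 0 1)) = _
      rw [h2, d2, map_mul, Hf.central_fix k v₁ v₂ k1 k2, k2, Hf.mk_mul]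
      simp only [Hf.mk_inj]; norm_num
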